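/- In the setting of the generalized implicit function theorem (X, Y Banach, Σ topological, σ̂ ∈ Σ, V a neighborhood of x̂, Q ⊆ X convex closed, F̂ ∈ C¹ₓ((V∩Q)×Σ, Y), F̂(x̂,σ̂)=0, F̂ₓ(x̂,σ̂) invertible, with neighborhoods V₀′ ⊆ V₀ ⊆ V, U₀, W₀ from its conclusion), suppose both F̂ and some F ∈ W₀ satisfy the tangency condition: x − F̂ₓ(x̂,σ̂)⁻¹ F̂(x,σ) ∈ Q and x − F̂ₓ(x̂,σ̂)⁻¹ F(x,σ) ∈ Q for all (x,σ) ∈ (V₀′∩Q)×U₀. Then there exist continuous maps g_F: U₀ → V₀∩Q and g_F̂: U₀ → V₀∩Q with F(g_F(σ),σ) = 0 and F̂(g_F̂(σ),σ) = 0 for all σ ∈ U₀, and there is a neighborhood U₀′ ⊆ U₀ of σ̂ such that sup_{σ∈U₀′} ‖g_F(σ) − g_F̂(σ)‖_X ≤ 2‖F̂ₓ(x̂,σ̂)⁻¹‖ · sup_{(x,σ)∈(V∩Q)×Σ} ‖F(x,σ) − F̂(x,σ)‖_Y. Moreover F(x,σ)=0 (resp. F̂(x,σ)=0) with x ∈ V₀∩Q,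 σ ∈ U₀ forces x = g_F(σ) (resp. x = g_F̂(σ)). -/

import Mathlib

/-! A zero of `G(·, σ)` is a fixed point of the simplified Newton map
`x ↦ x - F̂ₓ(x̂, σ̂)⁻¹ G(x, σ)`. For `(x, σ)` near `(x̂, σ̂)` and `G` close to `F̂` in `C¹ₓ`, the
mean value theorem makes this map a `1/2`-contraction of `closedBall x̂ r ∩ Q`, and the tangency
condition keeps it inside `Q`; so Banach's fixed point theorem gives the implicit function `g`.
The a priori bound `‖x - g σ‖ ≤ ‖x - f σ x‖ / (1 - 1/2)` for a contraction `f σ` yields, in turn,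
continuity of `g`, uniqueness of the zero, and, at `x = g_F̂(σ)`, where `f σ x - x` is
`F̂ₓ(x̂, σ̂)⁻¹ (F - F̂)(x, σ)`, the estimate `‖g_F - g_F̂‖ ≤ 2 ‖F̂ₓ(x̂, σ̂)⁻¹‖ ‖F - F̂‖`. -/

open Set Filter Topology Metric NNReal Function

section ParametricContraction

variable {α S : Type*} [MetricSpace α] [TopologicalSpace S]

theorem LipschitzOnWith.mapsTo_closedBall {f : α → α} {K : ℝ≥0} {t : Set α} {c : α} {r : ℝ}
    (hf : LipschitzOnWith K f t) (ht : t ⊆ closedBall c r) (hc : c ∈ t)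
    (hfc : dist (f c) c ≤ (1 - (K : ℝ)) * r) : MapsTo f t (closedBall c r) := fun x hx =>
  calc dist (f x) c ≤ dist (f x) (f c) + dist (f c) c := dist_triangle _ _ _
    _ ≤ K * dist x c + (1 - (K : ℝ)) * r := add_le_add (hf.dist_le_mul x hx c hc) hfc
    _ ≤ K * r + (1 - (K : ℝ)) * r := by gcongr; exact ht hx
    _ = r := by ring

theorem exists_isFixedPt_dist_le_of_lipschitzOnWith {f : α → α} {s : Set α} {K : ℝ≥0}
    (hK : K < 1) (hs : IsComplete s) (hne : s.Nonempty) (hmaps : MapsTo f s s)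
    (hf : LipschitzOnWith K f s) :
    ∃ y ∈ s, IsFixedPt f y ∧ ∀ x ∈ s, dist x y ≤ dist x (f x) / (1 - K) := by
  have hc : ContractingWith K (hmaps.restrict f s s) := ⟨hK, hf.mapsToRestrict hmaps⟩
  obtain ⟨x₀, hx₀⟩ := hne
  obtain ⟨y, hys, hy, -⟩ := ContractingWith.exists_fixedPoint' hs hmaps hc hx₀ (edist_ne_top _ _)
  exact ⟨y, hys, hy, fun x hx => hc.dist_le_of_fixedPoint ⟨x, hx⟩ (y := ⟨y, hys⟩) (Subtype.ext hy)⟩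

theorem exists_continuousOn_isFixedPt_of_lipschitzOnWith {f : S → α → α} {s : Set α}
    {U : Set S} {K : ℝ≥0} (hK : K < 1) (hs : IsComplete s) (hne : s.Nonempty)
    (hmaps : ∀ σ ∈ U, MapsTo (f σ) s s) (hf : ∀ σ ∈ U, LipschitzOnWith K (f σ) s)
    (hcont : ∀ x ∈ s, ContinuousOn (f · x) U) :
    ∃ g : S → α, ContinuousOn g U ∧ (∀ σ ∈ U, g σ ∈ s ∧ IsFixedPt (f σ) (g σ)) ∧
      ∀ σ ∈ U, ∀ x ∈ s, dist x (g σ) ≤ dist x (f σ x) / (1 - K) := by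
  have hfix σ : ∃ y, σ ∈ U →
      y ∈ s ∧ IsFixedPt (f σ) y ∧ ∀ x ∈ s, dist x y ≤ dist x (f σ x) / (1 - K) := by
    by_cases hσ : σ ∈ U
    · obtain ⟨y, hy⟩ :=
        exists_isFixedPt_dist_le_of_lipschitzOnWith hK hs hne (hmaps σ hσ) (hf σ hσ)
      exact ⟨y, fun _ => hy⟩
    · exact ⟨hne.some, fun h => absurd h hσ⟩
  choose g hg using hfix
  refine ⟨g, fun σ₀ hσ₀ => ?_, fun σ hσ => ⟨(hg σ hσ).1, (hg σ hσ).2.1⟩,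
    fun σ hσ => (hg σ hσ).2.2⟩
  obtain ⟨hs₀, hfix₀, -⟩ := hg σ₀ hσ₀
  -- `g σ₀` is an approximate fixed point of `f σ` for `σ` near `σ₀`.
  have hlim : Tendsto (fun σ => dist (g σ₀) (f σ (g σ₀)) / (1 - K)) (𝓝[U] σ₀) (𝓝 0) := by
    simpa [hfix₀.eq] using
      ((tendsto_const_nhds (x := g σ₀)).dist (hcont _ hs₀ σ₀ hσ₀)).div_const (1 - (K : ℝ))
  rw [ContinuousWithinAt, tendsto_iff_dist_tendsto_zero]
  refine squeeze_zero' (Eventually.of_forall fun _ => dist_nonneg) ?_ hlim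
  filter_upwards [self_mem_nhdsWithin] with σ hσ
  rw [dist_comm]
  exact (hg σ hσ).2.2 _ hs₀

end ParametricContraction

theorem exists_closedBall_nhds_forall_dist_lt {α β γ : Type*} [PseudoMetricSpace α]
    [TopologicalSpace β] [PseudoMetricSpace γ] {f : α → β → γ} {a : α} {b : β}
    (hf : ContinuousAt (fun p : α × β => f p.1 p.2) (a, b)) {V : Set α} (hV : V ∈ 𝓝 a)
    {ε : ℝ} (hε : 0 < ε) :
    ∃ r > 0, closedBall a r ⊆ V ∧ ∃ U ∈ 𝓝 b, ∀ x ∈ closedBall a r, ∀ σ ∈ U,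
      dist (f x σ) (f a b) < ε := by
  obtain ⟨u, hu, U, hU, huU⟩ := mem_nhds_prod_iff.1 (hf (ball_mem_nhds _ hε))
  obtain ⟨r, hr, hru⟩ := nhds_basis_closedBall.mem_iff.1 (inter_mem hu hV)
  exact ⟨r, hr, fun x hx => (hru hx).2, U, hU, fun x hx σ hσ =>
    huU (mk_mem_prod (hru hx).1 hσ)⟩

section Newton

variable {X Y S : Type*} [NormedAddCommGroup X] [NormedSpace ℝ X]
  [NormedAddCommGroup Y] [NormedSpace ℝ Y]

theorem Convex.lipschitzOnWith_sub_symm_comp {s : Set X} (hs : Convex ℝ s) (e : X ≃L[ℝ] Y)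
    {φ : X → Y} {φ' : X → X →L[ℝ] Y} (hφ : ∀ x ∈ s, HasFDerivWithinAt φ (φ' x) s x) {K : ℝ≥0}
    (hK : ∀ x ∈ s, ‖(e.symm : Y →L[ℝ] X)‖ * ‖φ' x - e‖ ≤ K) :
    LipschitzOnWith K (fun x => x - e.symm (φ x)) s := by
  set T : Y →L[ℝ] X := (e.symm : Y →L[ℝ] X)
  refine hs.lipschitzOnWith_of_nnnorm_hasFDerivWithin_le
    (f' := fun x => ContinuousLinearMap.id ℝ X - T.comp (φ' x))
    (fun x hx => (hasFDerivWithinAt_id x s).sub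
      (T.hasFDerivAt.comp_hasFDerivWithinAt x (hφ x hx))) fun x hx => ?_
  -- `T ∘ e = id`, so the derivative of the Newton map is `-T ∘ (φ' - e)`.
  have hder : ContinuousLinearMap.id ℝ X - T.comp (φ' x) = -T.comp (φ' x - (e : X →L[ℝ] Y)) := by
    ext v
    simp [T]
  rw [← NNReal.coe_le_coe, coe_nnnorm, hder, norm_neg]
  exact (T.opNorm_comp_le _).trans (hK x hx)

variable [TopologicalSpace S]

theorem exists_nhds_newton_bounds {Fh : X → S → Y} {Fh' : X → S → X →L[ℝ] Y} {xh : X} {sh : S}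
    {V : Set X} (hV : V ∈ 𝓝 xh) (hFh : ContinuousAt (Fh xh) sh)
    (hFh' : ContinuousAt (fun p : X × S => Fh' p.1 p.2) (xh, sh)) (hFh0 : Fh xh sh = 0)
    (e : X ≃L[ℝ] Y) (he : (e : X →L[ℝ] Y) = Fh' xh sh) :
    ∃ r > 0, closedBall xh r ⊆ V ∧ ∃ U ∈ 𝓝 sh, ∃ δ > 0,
      (∀ σ ∈ U, ∀ x ∈ closedBall xh r, ∀ L : X →L[ℝ] Y, ‖L - Fh' x σ‖ < δ →
        ‖(e.symm : Y →L[ℝ] X)‖ * ‖L - e‖ ≤ 1 / 2) ∧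
      ∀ σ ∈ U, ∀ y : Y, ‖y - Fh xh σ‖ < δ → ‖e.symm y‖ ≤ r / 2 := by
  set T : Y →L[ℝ] X := (e.symm : Y →L[ℝ] X)
  -- `‖T‖` itself may vanish (when `X` is trivial), so we scale by `‖T‖ + 1`.
  set M := ‖T‖ + 1
  have hM : 0 < M := by positivity
  have hTM : ‖T‖ ≤ M := by linarith
  obtain ⟨r, hr, hrV, U₁, hU₁, hFh'U₁⟩ :=
    exists_closedBall_nhds_forall_dist_lt hFh' hV (ε := 1 / (4 * M)) (by positivity)
  set δ := min 1 r / (4 * M)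
  have hδ : 0 < δ := by positivity
  have hδ1 : δ ≤ 1 / (4 * M) := div_le_div_of_nonneg_right (min_le_left _ _) (by positivity)
  have hδr : M * (δ + δ) ≤ r / 2 := by
    have : min 1 r ≤ r := min_le_right _ _
    simp only [δ]
    field_simp
    linarith
  have hU₂ : ∀ᶠ σ in 𝓝 sh, ‖Fh xh σ‖ < δ := by
    simpa [hFh0] using hFh.eventually (ball_mem_nhds (Fh xh sh) hδ)
  refine ⟨r, hr, hrV, U₁ ∩ {σ | ‖Fh xh σ‖ < δ}, inter_mem hU₁ hU₂, δ, hδ,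
    fun σ hσ x hx L hL => ?_, fun σ hσ y hy => ?_⟩
  · have hFh'x : ‖Fh' x σ - e‖ < 1 / (4 * M) := by
      simpa [he, dist_eq_norm] using hFh'U₁ x hx σ hσ.1
    calc ‖T‖ * ‖L - e‖ ≤ M * (‖L - Fh' x σ‖ + ‖Fh' x σ - e‖) := by
          gcongr
          exact norm_sub_le_norm_sub_add_norm_sub _ _ _
      _ ≤ M * (1 / (4 * M) + 1 / (4 * M)) := by gcongr; linarith
      _ = 1 / 2 := by field_simp; ring
  · calc ‖T y‖ ≤ M * (‖y - Fh xh σ‖ + ‖Fh xh σ‖) := by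
          refine (T.le_opNorm y).trans ?_
          gcongr
          exact norm_le_norm_sub_add _ _
      _ ≤ M * (δ + δ) := by gcongr; exact hσ.2.le
      _ ≤ r / 2 := hδr

variable [CompleteSpace X]

theorem exists_continuousOn_zero_of_newton (e : X ≃L[ℝ] Y) {G : X → S → Y}
    {G' : X → S → X →L[ℝ] Y} {Q : Set X} (hQ : Convex ℝ Q) (hQcl : IsClosed Q) {c : X}
    (hc : c ∈ Q) {r : ℝ} (hr : 0 ≤ r) {U : Set S} (hG : ∀ x, ContinuousOn (G x) U)
    (hGd : ∀ σ ∈ U, ∀ x ∈ closedBall c r ∩ Q,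
      HasFDerivWithinAt (G · σ) (G' x σ) (closedBall c r ∩ Q) x)
    (hG' : ∀ σ ∈ U, ∀ x ∈ closedBall c r ∩ Q, ‖(e.symm : Y →L[ℝ] X)‖ * ‖G' x σ - e‖ ≤ 1 / 2)
    (hGc : ∀ σ ∈ U, ‖e.symm (G c σ)‖ ≤ r / 2)
    (htan : ∀ x ∈ closedBall c r ∩ Q, ∀ σ ∈ U, x - e.symm (G x σ) ∈ Q) :
    ∃ g : S → X, ContinuousOn g U ∧ (∀ σ ∈ U, g σ ∈ closedBall c r ∩ Q ∧ G (g σ) σ = 0) ∧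
      (∀ σ ∈ U, ∀ x ∈ closedBall c r ∩ Q, ‖x - g σ‖ ≤ 2 * ‖e.symm (G x σ)‖) ∧
      ∀ σ ∈ U, ∀ x ∈ closedBall c r ∩ Q, G x σ = 0 → x = g σ := by
  set s := closedBall c r ∩ Q
  have hcs : c ∈ s := ⟨mem_closedBall_self hr, hc⟩
  have hlip : ∀ σ ∈ U, LipschitzOnWith (1 / 2) (fun x => x - e.symm (G x σ)) s :=
    fun σ hσ => ((convex_closedBall c r).inter hQ).lipschitzOnWith_sub_symm_comp e (hGd σ hσ)
      fun x hx => (hG' σ hσ x hx).trans_eq (by norm_num)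
  have hmaps : ∀ σ ∈ U, MapsTo (fun x => x - e.symm (G x σ)) s s := fun σ hσ x hx =>
    ⟨(hlip σ hσ).mapsTo_closedBall inter_subset_left hcs
      (by norm_num [dist_eq_norm]; linarith [hGc σ hσ]) hx, htan x hx σ hσ⟩
  obtain ⟨g, hgc, hgs, hgd⟩ := exists_continuousOn_isFixedPt_of_lipschitzOnWith (f := fun σ x =>
      x - e.symm (G x σ)) (by norm_num) (isClosed_closedBall.inter hQcl).isComplete ⟨c, hcs⟩
    hmaps hlip fun x _ => continuousOn_const.sub (e.symm.continuous.comp_continuousOn (hG x))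
  have hdist : ∀ σ ∈ U, ∀ x ∈ s, ‖x - g σ‖ ≤ 2 * ‖e.symm (G x σ)‖ := fun σ hσ x hx => by
    simpa [dist_eq_norm, div_eq_inv_mul, show (1 - 2⁻¹ : ℝ)⁻¹ = 2 by norm_num] using
      hgd σ hσ x hx
  refine ⟨g, hgc, fun σ hσ => ⟨(hgs σ hσ).1, ?_⟩, hdist, fun σ hσ x hx hx0 => ?_⟩
  · simpa [IsFixedPt] using (hgs σ hσ).2
  · simpa [hx0, sub_eq_zero] using hdist σ hσ x hx

end Newton

theorem generalized_implicit_function_corollary_general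
    {X Y : Type*} [NormedAddCommGroup X] [NormedSpace ℝ X] [CompleteSpace X]
    [NormedAddCommGroup Y] [NormedSpace ℝ Y]
    {S : Type*} [TopologicalSpace S] (sh : S)
    (xh : X) (V : Set X) (hV : V ∈ 𝓝 xh)
    (Q : Set X) (hQconv : Convex ℝ Q) (hQcl : IsClosed Q) (hxhQ : xh ∈ Q)
    (Fh : X → S → Y) (Fhx : X → S → (X →L[ℝ] Y))
    (hFhc : Continuous fun p : X × S => Fh p.1 p.2)
    (hFhd : ∀ x σ, HasFDerivAt (fun y => Fh y σ) (Fhx x σ) x)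
    (hFhxc : Continuous fun p : X × S => Fhx p.1 p.2)
    (hFh0 : Fh xh sh = 0)
    (e : X ≃L[ℝ] Y) (he : (e : X →L[ℝ] Y) = Fhx xh sh) :
    ∃ (V₀' V₀ : Set X) (U₀ : Set S) (δ : ℝ),
      V₀' ⊆ V₀ ∧ V₀ ⊆ V ∧ V₀' ∈ 𝓝 xh ∧ V₀ ∈ 𝓝 xh ∧ U₀ ∈ 𝓝 sh ∧ 0 < δ ∧
      ∀ (F : X → S → Y) (Fx : X → S → (X →L[ℝ] Y)),
        Continuous (fun p : X × S => F p.1 p.2) →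
        (∀ x σ, HasFDerivAt (fun y => F y σ) (Fx x σ) x) →
        Continuous (fun p : X × S => Fx p.1 p.2) →
        -- `F ∈ W₀`, a `C¹ₓ`-ball around `F̂` of radius `δ`
        (∃ a b : ℝ, (∀ x ∈ V ∩ Q, ∀ σ : S, ‖F x σ - Fh x σ‖ ≤ a) ∧
          (∀ x ∈ V ∩ Q, ∀ σ : S, ‖Fx x σ - Fhx x σ‖ ≤ b) ∧ a + b < δ) →
        -- tangency conditions for `F` and for `F̂`
        (∀ x ∈ V₀' ∩ Q, ∀ σ ∈ U₀, x - e.symm (F x σ) ∈ Q) →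
        (∀ x ∈ V₀' ∩ Q, ∀ σ ∈ U₀, x - e.symm (Fh x σ) ∈ Q) →
        ∃ gF gFh : S → X,
          ContinuousOn gF U₀ ∧ ContinuousOn gFh U₀ ∧
          (∀ σ ∈ U₀, gF σ ∈ V₀ ∩ Q) ∧ (∀ σ ∈ U₀, gFh σ ∈ V₀ ∩ Q) ∧
          (∀ σ ∈ U₀, F (gF σ) σ = 0) ∧ (∀ σ ∈ U₀, Fh (gFh σ) σ = 0) ∧
          (∃ U₀' ∈ 𝓝 sh, U₀' ⊆ U₀ ∧
            ∀ c : ℝ, (∀ x ∈ V ∩ Q, ∀ σ : S, ‖F x σ - Fh x σ‖ ≤ c) →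
              ∀ σ ∈ U₀', ‖gF σ - gFh σ‖ ≤ 2 * ‖(e.symm : Y →L[ℝ] X)‖ * c) ∧
          (∀ x ∈ V₀ ∩ Q, ∀ σ ∈ U₀, F x σ = 0 → x = gF σ) ∧
          (∀ x ∈ V₀ ∩ Q, ∀ σ ∈ U₀, Fh x σ = 0 → x = gFh σ) := by
  obtain ⟨r, hr, hrV, U₀, hU₀, δ, hδ, hderiv, hvalue⟩ := exists_nhds_newton_bounds hV
    (hFhc.comp (Continuous.prodMk_right xh)).continuousAt hFhxc.continuousAt hFh0 e he
  refine ⟨closedBall xh r, closedBall xh r, U₀, δ, subset_rfl, hrV, closedBall_mem_nhds xh hr,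
    closedBall_mem_nhds xh hr, hU₀, hδ, ?_⟩
  rintro F F' hFc hFd - ⟨a, b, ha, hb, hab⟩ htF htFh
  have hxh : xh ∈ V ∩ Q := ⟨mem_of_mem_nhds hV, hxhQ⟩
  have hsV : closedBall xh r ∩ Q ⊆ V ∩ Q := inter_subset_inter_left _ hrV
  have ha0 : 0 ≤ a := (norm_nonneg _).trans (ha xh hxh sh)
  have hb0 : 0 ≤ b := (norm_nonneg _).trans (hb xh hxh sh)
  obtain ⟨gF, hgFc, hgF, hgF_dist, hgF_unique⟩ :=
    exists_continuousOn_zero_of_newton e (G := F) hQconv hQcl hxhQ hr.le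
    (fun x => (hFc.comp (Continuous.prodMk_right x)).continuousOn)
    (fun σ _ x _ => (hFd x σ).hasFDerivWithinAt)
    (fun σ hσ x hx => hderiv σ hσ x hx.1 _ ((hb x (hsV hx) σ).trans_lt (by linarith)))
    (fun σ hσ => hvalue σ hσ _ ((ha xh hxh σ).trans_lt (by linarith))) htF
  obtain ⟨gFh, hgFhc, hgFh, -, hgFh_unique⟩ :=
    exists_continuousOn_zero_of_newton e (G := Fh) hQconv hQcl hxhQ hr.le
    (fun x => (hFhc.comp (Continuous.prodMk_right x)).continuousOn)
    (fun σ _ x _ => (hFhd x σ).hasFDerivWithinAt)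
    (fun σ hσ x hx => hderiv σ hσ x hx.1 _ (by simpa using hδ))
    (fun σ hσ => hvalue σ hσ _ (by simpa using hδ)) htFh
  refine ⟨gF, gFh, hgFc, hgFhc, fun σ hσ => (hgF σ hσ).1, fun σ hσ => (hgFh σ hσ).1,
    fun σ hσ => (hgF σ hσ).2, fun σ hσ => (hgFh σ hσ).2, ⟨U₀, hU₀, subset_rfl, ?_⟩,
    fun x hx σ hσ => hgF_unique σ hσ x hx, fun x hx σ hσ => hgFh_unique σ hσ x hx⟩
  intro c hc σ hσ
  have hdefect : ‖F (gFh σ) σ‖ ≤ c := by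
    simpa only [(hgFh σ hσ).2, sub_zero] using hc _ (hsV (hgFh σ hσ).1) σ
  calc ‖gF σ - gFh σ‖ = ‖gFh σ - gF σ‖ := norm_sub_rev _ _
    _ ≤ 2 * ‖e.symm (F (gFh σ) σ)‖ := hgF_dist σ hσ _ (hgFh σ hσ).1
    _ ≤ 2 * (‖(e.symm : Y →L[ℝ] X)‖ * c) := by
        gcongr
        exact (e.symm : Y →L[ℝ] X).le_opNorm_of_le hdefect
    _ = 2 * ‖(e.symm : Y →L[ℝ] X)‖ * c := by ring

/-- **Corollary to the generalized implicit function theorem.**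
If both `F̂` and `F ∈ W₀` satisfy the tangency condition, then both implicit
functions `g_F, g_F̂ : U₀ → V₀ ∩ Q` exist, and on a smaller neighborhood `U₀'`
of `σ̂` one has `‖g_F − g_F̂‖_{C(U₀',X)} ≤ 2‖F̂ₓ(x̂,σ̂)⁻¹‖ ‖F − F̂‖_{C((V∩Q)×Σ,Y)}`. -/
theorem generalized_implicit_function_corollary
    {X Y : Type*} [NormedAddCommGroup X] [NormedSpace ℝ X] [CompleteSpace X]
    [NormedAddCommGroup Y] [NormedSpace ℝ Y] [CompleteSpace Y]
    {S : Type*} [TopologicalSpace S] (sh : S)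
    (xh : X) (V : Set X) (hV : V ∈ 𝓝 xh)
    (Q : Set X) (hQconv : Convex ℝ Q) (hQcl : IsClosed Q) (hxhQ : xh ∈ Q)
    (Fh : X → S → Y) (Fhx : X → S → (X →L[ℝ] Y))
    (hFhc : Continuous fun p : X × S => Fh p.1 p.2)
    (hFhd : ∀ x σ, HasFDerivAt (fun y => Fh y σ) (Fhx x σ) x)
    (hFhxc : Continuous fun p : X × S => Fhx p.1 p.2)
    (hFhbdd : ∃ C : ℝ, ∀ x ∈ V ∩ Q, ∀ σ : S, ‖Fh x σ‖ + ‖Fhx x σ‖ ≤ C)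
    (hFh0 : Fh xh sh = 0)
    (e : X ≃L[ℝ] Y) (he : (e : X →L[ℝ] Y) = Fhx xh sh) :
    ∃ (V₀' V₀ : Set X) (U₀ : Set S) (δ : ℝ),
      V₀' ⊆ V₀ ∧ V₀ ⊆ V ∧ V₀' ∈ 𝓝 xh ∧ V₀ ∈ 𝓝 xh ∧ U₀ ∈ 𝓝 sh ∧ 0 < δ ∧
      ∀ (F : X → S → Y) (Fx : X → S → (X →L[ℝ] Y)),
        Continuous (fun p : X × S => F p.1 p.2) →
        (∀ x σ, HasFDerivAt (fun y => F y σ) (Fx x σ) x) →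
        Continuous (fun p : X × S => Fx p.1 p.2) →
        -- `F ∈ W₀`, a `C¹ₓ`-ball around `F̂` of radius `δ`
        (∃ a b : ℝ, (∀ x ∈ V ∩ Q, ∀ σ : S, ‖F x σ - Fh x σ‖ ≤ a) ∧
          (∀ x ∈ V ∩ Q, ∀ σ : S, ‖Fx x σ - Fhx x σ‖ ≤ b) ∧ a + b < δ) →
        -- tangency conditions for `F` and for `F̂`
        (∀ x ∈ V₀' ∩ Q, ∀ σ ∈ U₀, x - e.symm (F x σ) ∈ Q) →
        (∀ x ∈ V₀' ∩ Q, ∀ σ ∈ U₀, x - e.symm (Fh x σ) ∈ Q) →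
        ∃ gF gFh : S → X,
          ContinuousOn gF U₀ ∧ ContinuousOn gFh U₀ ∧
          (∀ σ ∈ U₀, gF σ ∈ V₀ ∩ Q) ∧ (∀ σ ∈ U₀, gFh σ ∈ V₀ ∩ Q) ∧
          (∀ σ ∈ U₀, F (gF σ) σ = 0) ∧ (∀ σ ∈ U₀, Fh (gFh σ) σ = 0) ∧
          (∃ U₀' ∈ 𝓝 sh, U₀' ⊆ U₀ ∧
            ∀ c : ℝ, (∀ x ∈ V ∩ Q, ∀ σ : S, ‖F x σ - Fh x σ‖ ≤ c) →
              ∀ σ ∈ U₀', ‖gF σ - gFh σ‖ ≤ 2 * ‖(e.symm : Y →L[ℝ] X)‖ * c) ∧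
          (∀ x ∈ V₀ ∩ Q, ∀ σ ∈ U₀, F x σ = 0 → x = gF σ) ∧
          (∀ x ∈ V₀ ∩ Q, ∀ σ ∈ U₀, Fh x σ = 0 → x = gFh σ) :=
  generalized_implicit_function_corollary_general sh xh V hV Q hQconv hQcl hxhQ Fh Fhx hFhc hFhd
    hFhxc hFh0 e he
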